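/- arXiv:1701.04107 — 5 statements merged into one kernel-verified Lean document; each statement's English description precedes it below -/
import Mathlib

section
/- For integers s ≥ 3, m ≥ 1, and any k ≤ m, we have ∑_{j=1}^{k-1} C(sm+s-2, j) ≤ (1/(s-2)) · C(sm+s-2, k). -/
/-! With `n = s * m + s - 2`, for `j < m` the ratio `C(n, j + 1) / C(n, j) = (n - j) / (j + 1)` is at
least `s - 1`. The coefficients below `k ≤ m` therefore grow geometrically with ratio `s - 1`, and
telescoping bounds their sum by `C(n, k) / (s - 2)`. -/

theorem sub_one_mul_sum_range_le_of_mul_le_succ {α : Type*} [Ring α] [PartialOrder α]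
    [IsOrderedAddMonoid α] {a : ℕ → α} {r : α} {k : ℕ}
    (h : ∀ j < k, r * a j ≤ a (j + 1)) :
    (r - 1) * ∑ j ∈ Finset.range k, a j ≤ a k - a 0 := by
  rw [Finset.mul_sum, ← Finset.sum_range_sub]
  refine Finset.sum_le_sum fun j hj => ?_
  rw [sub_one_mul]
  exact sub_le_sub_right (h j (Finset.mem_range.1 hj)) _

theorem Nat.mul_choose_le_choose_succ {n j r : ℕ} (h : r * (j + 1) ≤ n - j) :
    r * n.choose j ≤ n.choose (j + 1) := by
  refine Nat.le_of_mul_le_mul_right (c := j + 1) ?_ j.succ_pos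
  calc r * n.choose j * (j + 1) = n.choose j * (r * (j + 1)) := by ring
    _ ≤ n.choose j * (n - j) := Nat.mul_le_mul_left _ h
    _ = n.choose (j + 1) * (j + 1) := (Nat.choose_succ_right_eq n j).symm

theorem stmt_0_general (s m k : ℕ) (hs : 3 ≤ s) (hk : k ≤ m) :
    (∑ j ∈ Finset.Ico 1 k, ((s * m + s - 2).choose j : ℚ)) ≤
      (1 / (s - 2 : ℚ)) * ((s * m + s - 2).choose k : ℚ) := by
  set n := s * m + s - 2
  have hratio : ∀ j < k, ((s : ℚ) - 1) * n.choose j ≤ n.choose (j + 1) := by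
    intro j hj
    have hsj : s * (j + 1) ≤ s * m := Nat.mul_le_mul_left s (by omega)
    have hle : (s - 1) * (j + 1) ≤ n - j := by
      rw [Nat.sub_one_mul]
      omega
    have hcast := (Nat.cast_le (α := ℚ)).2 (Nat.mul_choose_le_choose_succ hle)
    push_cast [Nat.cast_sub (show 1 ≤ s by omega)] at hcast
    exact hcast
  have htele := sub_one_mul_sum_range_le_of_mul_le_succ hratio
  have hIco : ∑ j ∈ Finset.Ico 1 k, (n.choose j : ℚ) ≤ ∑ j ∈ Finset.range k, (n.choose j : ℚ) :=
    Finset.sum_le_sum_of_subset_of_nonneg (fun j hj => by simp only [Finset.mem_Ico, Finset.mem_range] at hj ⊢; omega)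
      fun _ _ _ => by positivity
  have hs2 : (0 : ℚ) < s - 2 := by
    have : (3 : ℚ) ≤ s := by exact_mod_cast hs
    linarith
  rw [one_div_mul_eq_div, le_div_iff₀ hs2]
  simp only [Nat.choose_zero_right, Nat.cast_one] at htele
  calc (∑ j ∈ Finset.Ico 1 k, (n.choose j : ℚ)) * (s - 2)
      ≤ (s - 1 - 1) * ∑ j ∈ Finset.range k, (n.choose j : ℚ) := by
        rw [mul_comm, sub_sub, one_add_one_eq_two]
        exact mul_le_mul_of_nonneg_left hIco hs2.le
    _ ≤ n.choose k := by linarith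

theorem stmt_0 (s m k : ℕ) (hs : 3 ≤ s) (hm : 1 ≤ m) (hk : k ≤ m) :
    (∑ j ∈ Finset.Ico 1 k, ((s * m + s - 2).choose j : ℚ)) ≤
      (1 / (s - 2 : ℚ)) * ((s * m + s - 2).choose k : ℚ) :=
  stmt_0_general s m k hs hk
end

section
/- If F ⊆ 2^{[6]} is a family with no 4 pairwise disjoint members, then |F| ≤ 2^6 - 6 = 58. -/
/-!
We show that `F` misses at least six subsets of `Fin 6`. If `F` contains two singletons `{x}`
and `{y}`, put `R = {x, y}ᶜ`: for each `A ⊆ R` at most one of `A` and `R \ A` lies in `F`, so `F`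
misses at least half of the `2 ^ 4` subsets of `R`. If `∅ ∈ F`, then `F` contains no partition of
`Fin 6` into three blocks, and there are six such partitions no two of which share a block.
Otherwise `F` misses `∅` and at least five singletons.
-/

open Finset Function

section

variable {α : Type*} [DecidableEq α]

theorem card_le_card_compl_of_forall_not_subset {ι : Type*} [Fintype ι] [Fintype α]
    {T : ι → Finset α} (hT : Pairwise (Disjoint on T)) {F : Finset α}
    (h : ∀ i, ¬ T i ⊆ F) : Fintype.card ι ≤ #Fᶜ := by
  choose b hbT hbF using fun i => not_subset.1 (h i)
  exact card_le_card_of_injOn b (fun i _ => mem_compl.2 (hbF i))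
    fun i _ j _ hij => by_contra fun hne => disjoint_left.1 (hT hne) (hbT i) (hij ▸ hbT j)

theorem two_pow_card_le_two_mul_card_powerset_sdiff (R : Finset α) (G : Finset (Finset α))
    (h : ∀ A ⊆ R, A ∈ G → R \ A ∉ G) : 2 ^ #R ≤ 2 * #(R.powerset \ G) := by
  have hle : #(R.powerset ∩ G) ≤ #(R.powerset \ G) := by
    refine card_le_card_of_injOn (R \ ·) (fun A hA => ?_) fun A hA B hB hAB => ?_
    · obtain ⟨hAR, hAG⟩ := mem_inter.1 hA
      exact mem_sdiff.2 ⟨mem_powerset.2 sdiff_subset, h A (mem_powerset.1 hAR) hAG⟩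
    · have := congrArg (R \ ·) hAB
      simp only at this
      rwa [Finset.sdiff_sdiff_eq_self (mem_powerset.1 (mem_inter.1 hA).1),
        Finset.sdiff_sdiff_eq_self (mem_powerset.1 (mem_inter.1 hB).1)] at this
  have := card_inter_add_card_sdiff R.powerset G
  rw [card_powerset] at this
  omega

theorem notMem_of_pairwise_disjoint {F : Finset (Finset α)}
    (hF : ¬ ∃ S ⊆ F, #S = 4 ∧ (S : Set (Finset α)).Pairwise Disjoint)
    {a b c d : Finset α} (ha : a.Nonempty) (hb : b.Nonempty) (hcd : c ≠ d)
    (hab : Disjoint a b) (hac : Disjoint a c) (had : Disjoint a d)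
    (hbc : Disjoint b c) (hbd : Disjoint b d) (hcd' : Disjoint c d)
    (haF : a ∈ F) (hbF : b ∈ F) (hcF : c ∈ F) : d ∉ F := by
  intro hdF
  refine hF ⟨{a, b, c, d}, ?_, ?_, ?_⟩
  · simp [insert_subset_iff, haF, hbF, hcF, hdF]
  · rw [card_insert_of_notMem, card_insert_of_notMem, card_pair hcd]
    · simp [hbc.ne hb.ne_empty, hbd.ne hb.ne_empty]
    · simp [hab.ne ha.ne_empty, hac.ne ha.ne_empty, had.ne ha.ne_empty]
  · simp only [coe_insert, coe_singleton, Set.pairwise_insert, Set.pairwise_singleton,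
      Set.mem_insert_iff, Set.mem_singleton_iff]
    grind [Disjoint.symm]

theorem two_pow_le_two_mul_card_compl_of_singleton_mem [Fintype α]
    {F : Finset (Finset α)} (hF : ¬ ∃ S ⊆ F, #S = 4 ∧ (S : Set (Finset α)).Pairwise Disjoint)
    (hα : 2 < Fintype.card α) {x y : α} (hxy : x ≠ y) (hx : {x} ∈ F) (hy : {y} ∈ F) :
    2 ^ (Fintype.card α - 2) ≤ 2 * #Fᶜ := by
  set R : Finset α := {x, y}ᶜ
  have hR : #R = Fintype.card α - 2 := by rw [card_compl, card_pair hxy]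
  have hxR : Disjoint {x} R := by simp [R]
  have hyR : Disjoint {y} R := by simp [R]
  have hne : ∀ A ⊆ R, A ≠ R \ A := fun A _ hA => by
    have hA0 : Disjoint A (R \ A) := disjoint_sdiff
    rw [← hA, disjoint_self, bot_eq_empty] at hA0
    rw [hA0, sdiff_empty] at hA
    exact (card_pos.1 (by omega) : R.Nonempty).ne_empty hA.symm
  calc 2 ^ (Fintype.card α - 2) = 2 ^ #R := by rw [hR]
    _ ≤ 2 * #(R.powerset \ F) := two_pow_card_le_two_mul_card_powerset_sdiff R F fun A hAR hA =>
        notMem_of_pairwise_disjoint hF (singleton_nonempty x) (singleton_nonempty y)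
          (hne A hAR) (disjoint_singleton.2 hxy) (hxR.mono_right hAR)
          (hxR.mono_right sdiff_subset) (hyR.mono_right hAR) (hyR.mono_right sdiff_subset)
          disjoint_sdiff hx hy hA
    _ ≤ 2 * #Fᶜ := by
        gcongr
        exact fun A hA => mem_compl.2 (mem_sdiff.1 hA).2

theorem card_le_card_compl_of_empty_notMem [Fintype α] {F : Finset (Finset α)} (h0 : ∅ ∉ F)
    (hsing : ∀ x y : α, {x} ∈ F → {y} ∈ F → x = y) : Fintype.card α ≤ #Fᶜ := by
  set M := (univ.filter fun x : α => {x} ∈ F)ᶜ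
  have hM : Fintype.card α ≤ #M + 1 := by
    have hle : #(univ.filter fun x : α => {x} ∈ F) ≤ 1 :=
      card_le_one.2 fun x hx y hy => hsing x y (mem_filter.1 hx).2 (mem_filter.1 hy).2
    rw [card_compl]
    omega
  calc Fintype.card α ≤ #(insert ∅ (M.map ⟨singleton, singleton_injective⟩)) := by
        rwa [card_insert_of_notMem (by simp), card_map]
    _ ≤ #Fᶜ := card_le_card <| insert_subset (mem_compl.2 h0) fun s hs => by
        obtain ⟨x, hx, rfl⟩ := mem_map.1 hs
        simpa [M] using hx

end

def threePartitions : Fin 6 → Finset (Finset (Fin 6)) :=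
  ![{{0, 1}, {2, 3}, {4, 5}}, {{0, 2}, {1, 4}, {3, 5}}, {{0, 3}, {1, 5}, {2, 4}},
    {{0, 4}, {1, 3}, {2, 5}}, {{0, 5}, {1, 2}, {3, 4}}, {{0}, {1}, {2, 3, 4, 5}}]

set_option maxRecDepth 10000 in
theorem six_le_card_compl_of_empty_mem {F : Finset (Finset (Fin 6))}
    (hF : ¬ ∃ S ⊆ F, #S = 4 ∧ (S : Set (Finset (Fin 6))).Pairwise Disjoint) (h0 : ∅ ∈ F) :
    6 ≤ #Fᶜ := by
  have hQ : ∀ i, #(insert ∅ (threePartitions i)) = 4 ∧ ∀ s ∈ insert ∅ (threePartitions i),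
      ∀ t ∈ insert ∅ (threePartitions i), s ≠ t → Disjoint s t := by
    decide
  have hT : Pairwise (Disjoint on threePartitions) := by
    unfold Pairwise
    decide
  refine card_le_card_compl_of_forall_not_subset hT fun i hi => hF ?_
  exact ⟨insert ∅ (threePartitions i), insert_subset h0 hi, (hQ i).1, (hQ i).2⟩

theorem stmt_8 (F : Finset (Finset (Fin 6)))
    (h : ¬ ∃ S : Finset (Finset (Fin 6)),
        S ⊆ F ∧ S.card = 4 ∧ (S : Set (Finset (Fin 6))).Pairwise Disjoint) :
    F.card ≤ 58 := by
  suffices 6 ≤ #Fᶜ by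
    rw [card_compl, Fintype.card_finset, Fintype.card_fin] at this
    omega
  by_cases hsing : ∀ x y : Fin 6, {x} ∈ F → {y} ∈ F → x = y
  · by_cases h0 : ∅ ∈ F
    · exact six_le_card_compl_of_empty_mem h h0
    · simpa using card_le_card_compl_of_empty_notMem h0 hsing
  · push Not at hsing
    obtain ⟨x, y, hx, hy, hxy⟩ := hsing
    have := two_pow_le_two_mul_card_compl_of_singleton_mem h (by simp) hxy hx hy
    norm_num at this
    omega
end

section
/- If F ⊆ 2^{[7]} contains no 3 pairwise disjoint members, then |F| ≤ 2^7 - 23, i.e., at least 1 + C(7,1) + C(6,2) = 23 subsets of [7] are missing from F. -/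
/-!
If `∅ ∈ F`, then `F \ {∅}` contains no complementary pair, so `|F| ≤ 2^6 + 1`. If some
`{x} ∈ F`, the members avoiding `x` contain no pair complementary within `[7] \ {x}`, so
`|F| ≤ 2^6 + 2^5`. Otherwise every member has at least two elements and at most 64 have four or
more, so it suffices that the 2-sets `P` and the 3-sets `Q` of `F` satisfy `|P| + |Q| ≤ 41`.
If `P` is intersecting, `|P| ≤ 6` by Erdős–Ko–Rado. Otherwise take disjoint `e, f ∈ P`: at most
`6` members of `P` lie in `e ∪ f`, and every other `p ∈ P` is disjoint from exactly one
`g ∈ {e, f}`, so the 3-set `[7] \ (p ∪ g)` is missing from `F`; these 3-sets are distinct.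
-/

open Finset

section

variable {α : Type*}

def NoDisjointTriple (F : Finset (Finset α)) : Prop :=
  ¬ ∃ S ⊆ F, #S = 3 ∧ (S : Set (Finset α)).Pairwise Disjoint

variable [DecidableEq α]

theorem NoDisjointTriple.not_disjoint {F : Finset (Finset α)} (hF : NoDisjointTriple F)
    {a b c : Finset α} (ha : a ∈ F) (hb : b ∈ F) (hc : c ∈ F) (hb₀ : b.Nonempty)
    (hc₀ : c.Nonempty) (hab : Disjoint a b) (hac : Disjoint a c) : ¬ Disjoint b c := by
  intro hbc
  have hba : b ≠ a := hab.symm.ne hb₀.ne_empty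
  have hca : c ≠ a := hac.symm.ne hc₀.ne_empty
  have hbc' : b ≠ c := hbc.ne hb₀.ne_empty
  refine hF ⟨{a, b, c}, ?_, card_eq_three.2 ⟨a, b, c, hba.symm, hca.symm, hbc', rfl⟩, ?_⟩
  · simp [insert_subset_iff, ha, hb, hc]
  · simp [Set.pairwise_insert, hab, hac, hbc, hab.symm, hac.symm, hbc.symm]

theorem two_mul_card_le_of_sdiff_notMem {S : Finset α} {G : Finset (Finset α)}
    (hGS : ∀ A ∈ G, A ⊆ S) (hG : ∀ A ∈ G, S \ A ∉ G) : 2 * #G ≤ 2 ^ #S := by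
  have hinj : #(G.image (S \ ·)) = #G :=
    card_image_of_injOn fun A hA B hB hAB => by
      rw [← Finset.sdiff_sdiff_eq_self (hGS A hA), ← Finset.sdiff_sdiff_eq_self (hGS B hB)]
      exact congrArg (S \ ·) hAB
  have hdisj : Disjoint G (G.image (S \ ·)) :=
    disjoint_left.2 fun B hB hB' => by
      obtain ⟨A, hA, rfl⟩ := mem_image.1 hB'
      exact hG A hA hB
  have hsub : G ∪ G.image (S \ ·) ⊆ S.powerset := by
    rw [union_subset_iff, image_subset_iff]
    exact ⟨fun A hA => mem_powerset.2 (hGS A hA), fun _ _ => mem_powerset.2 sdiff_subset⟩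
  calc 2 * #G = #(G ∪ G.image (S \ ·)) := by rw [card_union_of_disjoint hdisj, hinj]; ring
    _ ≤ 2 ^ #S := (card_le_card hsub).trans_eq (card_powerset S)

theorem disjoint_or_disjoint_of_not_subset_union {p e f : Finset α} (hp : #p ≤ 2)
    (hpK : ¬ p ⊆ e ∪ f) (hef : Disjoint e f) : Disjoint p e ∨ Disjoint p f := by
  have hlt : #(p ∩ (e ∪ f)) < #p :=
    card_lt_card (inter_subset_left.ssubset_of_ne (mt inter_eq_left.1 hpK))
  have hsum : #(p ∩ e) + #(p ∩ f) = #(p ∩ (e ∪ f)) := by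
    rw [inter_union_distrib_left,
      card_union_of_disjoint (hef.mono inter_subset_right inter_subset_right)]
  simp only [disjoint_iff_inter_eq_empty, ← card_eq_zero]
  omega

variable [Fintype α]

theorem NoDisjointTriple.card_le_of_empty_mem {F : Finset (Finset α)} (hF : NoDisjointTriple F)
    (h₀ : ∅ ∈ F) : 2 * #F ≤ 2 ^ Fintype.card α + 2 := by
  have key : 2 * #(F.erase ∅) ≤ 2 ^ #(univ : Finset α) := by
    refine two_mul_card_le_of_sdiff_notMem (fun _ _ => subset_univ _) fun A hA hAc => ?_
    rw [mem_erase, ← nonempty_iff_ne_empty] at hA hAc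
    exact hF.not_disjoint h₀ hA.2 hAc.2 hA.1 hAc.1 (disjoint_empty_left _)
      (disjoint_empty_left _) disjoint_sdiff
  rw [card_univ] at key
  have := card_erase_add_one h₀
  omega

theorem NoDisjointTriple.card_le_of_singleton_mem {F : Finset (Finset α)}
    (hF : NoDisjointTriple F) (h₀ : ∅ ∉ F) {x : α} (hx : {x} ∈ F) :
    4 * #F ≤ 3 * 2 ^ Fintype.card α := by
  set S := univ.erase x
  have hmem : ∀ A, A ⊆ S ↔ x ∉ A := fun A => by simp [S, subset_erase]
  have hnon : 2 * #(F.nonMemberSubfamily x) ≤ 2 ^ #S := by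
    refine two_mul_card_le_of_sdiff_notMem
      (fun A hA => (hmem A).2 (mem_nonMemberSubfamily.1 hA).2) fun A hA hSA => ?_
    rw [mem_nonMemberSubfamily] at hA hSA
    have hne : ∀ B ∈ F, B.Nonempty := fun B hB =>
      nonempty_iff_ne_empty.2 fun h => h₀ (h ▸ hB)
    exact hF.not_disjoint hx hA.1 hSA.1 (hne _ hA.1) (hne _ hSA.1)
      (disjoint_singleton_left.2 hA.2) (disjoint_singleton_left.2 hSA.2) disjoint_sdiff
  have hmemb : #(F.memberSubfamily x) ≤ 2 ^ #S := by
    refine (card_le_card fun A hA => ?_).trans_eq (card_powerset S)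
    exact mem_powerset.2 ((hmem A).2 (mem_memberSubfamily.1 hA).2)
  have hcard : 2 ^ Fintype.card α = 2 * 2 ^ #S := by
    rw [← pow_succ', card_erase_add_one (mem_univ x), card_univ]
  rw [← card_memberSubfamily_add_card_nonMemberSubfamily x F]
  omega

theorem NoDisjointTriple.card_not_subset_add_card_le {F : Finset (Finset α)}
    (hF : NoDisjointTriple F) (hn : 5 ≤ Fintype.card α) {e f : Finset α} (he : e ∈ F)
    (hf : f ∈ F) (he₂ : #e = 2) (hf₂ : #f = 2) (hef : Disjoint e f) :
    #{p ∈ F | #p = 2 ∧ ¬ p ⊆ e ∪ f} + #{A ∈ F | #A = Fintype.card α - 4}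
      ≤ (Fintype.card α).choose 4 := by
  set R := {p ∈ F | #p = 2 ∧ ¬ p ⊆ e ∪ f}
  set Q := {A ∈ F | #A = Fintype.card α - 4}
  -- `g p` is the one of `e`, `f` disjoint from `p ∈ R`; it can be read off `T p` as well,
  -- which makes `X ↦ Xᶜ \ g X` a left inverse of `T` on `R`
  let g : Finset α → Finset α := fun X => if Disjoint X f then f else e
  let T : Finset α → Finset α := fun p => (p ∪ g p)ᶜ
  have hg : ∀ p ∈ R, Disjoint p (g p) ∧ g p ∈ F ∧ #(g p) = 2 ∧ g (T p) = g p := by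
    intro p hp
    obtain ⟨-, hp₂, hpK⟩ := mem_filter.1 hp
    by_cases hpf : Disjoint p f
    · simp only [g, T, if_pos hpf]
      exact ⟨hpf, hf, hf₂, if_pos (disjoint_compl_left_iff.2 subset_union_right)⟩
    · have hpe := (disjoint_or_disjoint_of_not_subset_union hp₂.le hpK hef).resolve_right hpf
      simp only [g, T, if_neg hpf]
      refine ⟨hpe, he, he₂, if_neg fun hTf => hpK ?_⟩
      have hfp : f ⊆ p :=
        Disjoint.left_le_of_le_sup_right (disjoint_compl_left_iff.1 hTf) hef.symm
      exact (eq_of_subset_of_card_le hfp (by omega)) ▸ subset_union_right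
  have hmaps : ∀ p ∈ R, T p ∈ (univ.powersetCard (Fintype.card α - 4)) \ Q := by
    intro p hp
    obtain ⟨hpg, hgF, hg₂, -⟩ := hg p hp
    obtain ⟨hpF, hp₂, -⟩ := mem_filter.1 hp
    have hT : #(T p) = Fintype.card α - 4 := by
      rw [card_compl, card_union_of_disjoint hpg, hp₂, hg₂]
    refine mem_sdiff.2 ⟨mem_powersetCard.2 ⟨subset_univ _, hT⟩, fun hTQ => ?_⟩
    exact hF.not_disjoint hpF hgF (mem_filter.1 hTQ).1 (card_pos.1 (by omega))
      (card_pos.1 (by omega)) hpg (disjoint_compl_right_iff.2 subset_union_left)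
      (disjoint_compl_right_iff.2 subset_union_right)
  have hinj : Set.InjOn T R := by
    refine Set.LeftInvOn.injOn (f₁' := fun X => Xᶜ \ g X) fun p hp => ?_
    obtain ⟨hpg, -, -, hgT⟩ := hg p hp
    simp only [T, hgT, compl_compl, union_sdiff_cancel_right hpg]
  have hQ : Q ⊆ univ.powersetCard (Fintype.card α - 4) := fun A hA =>
    mem_powersetCard.2 ⟨subset_univ A, (mem_filter.1 hA).2⟩
  have := card_le_card_of_injOn T (fun p hp => hmaps p hp) hinj
  rw [card_sdiff_of_subset hQ, card_powersetCard, card_univ, Nat.choose_symm (by omega)] at this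
  have := card_le_card hQ
  rw [card_powersetCard, card_univ, Nat.choose_symm (by omega)] at this
  omega

theorem NoDisjointTriple.card_two_add_card_compl_four_le {F : Finset (Finset α)}
    (hF : NoDisjointTriple F) (hn : 5 ≤ Fintype.card α) {e f : Finset α} (he : e ∈ F)
    (hf : f ∈ F) (he₂ : #e = 2) (hf₂ : #f = 2) (hef : Disjoint e f) :
    #{A ∈ F | #A = 2} + #{A ∈ F | #A = Fintype.card α - 4} ≤ 6 + (Fintype.card α).choose 4 := by
  have hin : #{p ∈ {A ∈ F | #A = 2} | p ⊆ e ∪ f} ≤ 6 := by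
    have hsub : {p ∈ {A ∈ F | #A = 2} | p ⊆ e ∪ f} ⊆ (e ∪ f).powersetCard 2 := fun p hp => by
      rw [mem_filter, mem_filter] at hp
      exact mem_powersetCard.2 ⟨hp.2, hp.1.2⟩
    have := card_le_card hsub
    rwa [card_powersetCard, card_union_of_disjoint hef, he₂, hf₂] at this
  have hout := hF.card_not_subset_add_card_le hn he hf he₂ hf₂ hef
  rw [← filter_filter] at hout
  have := card_filter_add_card_filter_not (s := {A ∈ F | #A = 2}) (· ⊆ e ∪ f)
  omega

end

theorem NoDisjointTriple.card_two_add_card_three_le {F : Finset (Finset (Fin 7))}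
    (hF : NoDisjointTriple F) : #{A ∈ F | #A = 2} + #{A ∈ F | #A = 3} ≤ 41 := by
  by_cases hP : (({A ∈ F | #A = 2} : Finset _) : Set (Finset (Fin 7))).Intersecting
  · have hP6 := erdos_ko_rado hP (fun A hA => (mem_filter.1 hA).2) (by norm_num)
    have hQ : #{A ∈ F | #A = 3} ≤ #((univ : Finset (Fin 7)).powersetCard 3) :=
      card_le_card fun A hA => mem_powersetCard.2 ⟨subset_univ A, (mem_filter.1 hA).2⟩
    have h73 : Nat.choose 7 3 = 35 := by decide
    simp only [card_powersetCard, card_univ, Fintype.card_fin, h73] at hQ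
    norm_num at hP6
    omega
  · simp only [Set.Intersecting, not_forall, not_not] at hP
    obtain ⟨e, he, f, hf, hef⟩ := hP
    rw [mem_coe, mem_filter] at he hf
    have h74 : Nat.choose 7 4 = 35 := by decide
    simpa [h74] using hF.card_two_add_card_compl_four_le (by simp) he.1 hf.1 he.2 hf.2 hef

theorem NoDisjointTriple.card_le_of_forall_singleton_notMem {F : Finset (Finset (Fin 7))}
    (hF : NoDisjointTriple F) (h₀ : ∅ ∉ F) (h₁ : ∀ x, {x} ∉ F) : #F ≤ 105 := by
  set L : Finset (Finset (Fin 7)) := {A | 4 ≤ #A}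
  have hsub : F ⊆ {A ∈ F | #A = 2} ∪ {A ∈ F | #A = 3} ∪ L := by
    intro A hA
    have h₂ : 2 ≤ #A := by
      by_contra! hA₂
      obtain h | h : #A = 0 ∨ #A = 1 := by omega
      · exact h₀ (card_eq_zero.1 h ▸ hA)
      · obtain ⟨x, rfl⟩ := card_eq_one.1 h
        exact h₁ x hA
    simp only [L, mem_union, mem_filter, mem_univ, true_and, hA]
    omega
  have hL : #L = 64 := by decide
  calc #F ≤ #({A ∈ F | #A = 2} ∪ {A ∈ F | #A = 3}) + #L :=
        (card_le_card hsub).trans (card_union_le _ _)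
    _ ≤ #{A ∈ F | #A = 2} + #{A ∈ F | #A = 3} + #L := Nat.add_le_add_right (card_union_le _ _) _
    _ ≤ 105 := by rw [hL]; linarith [hF.card_two_add_card_three_le]

theorem stmt_9 (F : Finset (Finset (Fin 7)))
    (h : ¬ ∃ S : Finset (Finset (Fin 7)),
        S ⊆ F ∧ S.card = 3 ∧ (S : Set (Finset (Fin 7))).Pairwise Disjoint) :
    F.card ≤ 2 ^ 7 - 23 := by
  have hF : NoDisjointTriple F := h
  by_cases h₀ : ∅ ∈ F
  · have := hF.card_le_of_empty_mem h₀
    simp only [Fintype.card_fin] at this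
    omega
  by_cases h₁ : ∃ x, {x} ∈ F
  · obtain ⟨x, hx⟩ := h₁
    have := hF.card_le_of_singleton_mem h₀ hx
    simp only [Fintype.card_fin] at this
    omega
  push Not at h₁
  exact hF.card_le_of_forall_singleton_notMem h₀ h₁
end

section
/- For every integer m ≥ 1, with n = 3m+1: C(n, m-2) + C(n, m-1) ≤ (1/4) · C(n, m+2). -/
/-!
Write `n = 3m + 1` and `a = C(n, m-1)`. Ratios of consecutive binomial coefficients give
`C(n, m-2) = a (m-1)/(2m+3)` (also for `m = 1`, where both sides vanish) and
`C(n, m+2) = 4a (2m+1)/(m+2)`, so the inequality reduces to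
`(3m+2)(m+2) ≤ (2m+1)(2m+3)`, i.e. to `1 ≤ m²`.
-/

theorem Nat.choose_add_mul_ascFactorial (n k j : ℕ) :
    n.choose (k + j) * (k + 1).ascFactorial j = n.choose k * (n - k).descFactorial j := by
  induction j with
  | zero => simp
  | succ j ih =>
    calc n.choose (k + j + 1) * (k + 1).ascFactorial (j + 1)
        = n.choose (k + j + 1) * (k + j + 1) * (k + 1).ascFactorial j := by
          rw [Nat.ascFactorial_succ]; ring
      _ = n.choose (k + j) * (k + 1).ascFactorial j * (n - k - j) := by
          rw [Nat.choose_succ_right_eq, Nat.sub_sub]; ring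
      _ = n.choose k * (n - k).descFactorial (j + 1) := by
          rw [ih, Nat.descFactorial_succ]; ring

theorem ite_choose_sub_two_mul (n m : ℕ) (hm : 1 ≤ m) :
    (if 2 ≤ m then n.choose (m - 2) else 0) * (n + 2 - m) = n.choose (m - 1) * (m - 1) := by
  split_ifs with h
  · obtain ⟨j, rfl⟩ := Nat.exists_eq_add_of_le' h
    simpa [Nat.add_sub_add_right] using (Nat.choose_succ_right_eq n j).symm
  · obtain rfl : m = 1 := by omega
    simp

theorem choose_three_mul_add_one_add_two_mul (m : ℕ) (hm : 1 ≤ m) :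
    (3 * m + 1).choose (m + 2) * (m + 2) = 4 * (3 * m + 1).choose (m - 1) * (2 * m + 1) := by
  obtain ⟨k, rfl⟩ := Nat.exists_eq_add_of_le' hm
  have h := Nat.choose_add_mul_ascFactorial (3 * (k + 1) + 1) k 3
  simp only [Nat.ascFactorial_succ, Nat.descFactorial_succ, Nat.ascFactorial_zero,
    Nat.descFactorial_zero, Nat.add_zero, Nat.sub_zero, Nat.mul_one,
    show 3 * (k + 1) + 1 - k = 2 * k + 4 by omega] at h
  refine Nat.eq_of_mul_eq_mul_right (show 0 < (k + 1) * (k + 2) by positivity) ?_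
  calc (3 * (k + 1) + 1).choose (k + 1 + 2) * (k + 1 + 2) * ((k + 1) * (k + 2))
      = (3 * (k + 1) + 1).choose (k + 3) * ((k + 1 + 2) * ((k + 1 + 1) * (k + 1))) := by ring
    _ = (3 * (k + 1) + 1).choose k * ((2 * k + 4 - 2) * ((2 * k + 4 - 1) * (2 * k + 4))) := h
    _ = 4 * (3 * (k + 1) + 1).choose (k + 1 - 1) * (2 * (k + 1) + 1) * ((k + 1) * (k + 2)) := by
        rw [show 2 * k + 4 - 2 = 2 * (k + 1) by omega, show 2 * k + 4 - 1 = 2 * k + 3 by omega,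
          Nat.add_sub_cancel]
        ring

theorem stmt_14 (m : ℕ) (hm : 1 ≤ m) :
    (if 2 ≤ m then ((3 * m + 1).choose (m - 2) : ℚ) else 0) +
        ((3 * m + 1).choose (m - 1) : ℚ) ≤
      (1 / 4) * ((3 * m + 1).choose (m + 2) : ℚ) := by
  have hx : (if 2 ≤ m then ((3 * m + 1).choose (m - 2) : ℚ) else 0) * (2 * m + 3) =
      (3 * m + 1).choose (m - 1) * (m - 1) := by
    have h := ite_choose_sub_two_mul (3 * m + 1) m hm
    rw [show 3 * m + 1 + 2 - m = 2 * m + 3 by omega] at h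
    exact_mod_cast h
  have hb : ((3 * m + 1).choose (m + 2) : ℚ) * (m + 2) =
      4 * (3 * m + 1).choose (m - 1) * (2 * m + 1) := by
    exact_mod_cast choose_three_mul_add_one_add_two_mul m hm
  have ha : (0 : ℚ) ≤ (3 * m + 1).choose (m - 1) := Nat.cast_nonneg _
  have hm2 : (0 : ℚ) ≤ (m - 1) * (m + 1) :=
    mul_nonneg (sub_nonneg.2 (by exact_mod_cast hm)) (by positivity)
  refine le_of_mul_le_mul_right ?_ (by positivity : (0 : ℚ) < (2 * m + 3) * (m + 2))
  linear_combination (m + 2) * hx - (2 * m + 3) / 4 * hb + mul_nonneg ha hm2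
end

section
/- For every integer m ≥ 3, with n = 3m+1: 2·C(n, m-2) + 2·C(n, m-1) ≤ C(n, m+3). -/
/-!
Below the middle the binomial coefficients increase, so `C(n, m-2) ≤ C(n, m-1)`, and it suffices
to show `4 C(n, m-1) ≤ C(n, m+3)`. Counting chains `(m-1)-set ⊆ (m+3)-set` both ways gives
`C(n, m+3) C(m+3, 4) = C(n, m-1) C(2m+2, 4)`, and `4 C(m+3, 4) ≤ C(2m+2, 4)` is the polynomial
inequality `(m+2)(m+3) ≤ (2m+1)(2m-1)`, valid for `m ≥ 3`.
-/

namespace Nat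

theorem mul_choose_le_choose_of_mul_choose_le {n k s c : ℕ} (hsk : s ≤ k)
    (h : c * k.choose s ≤ (n - s).choose (k - s)) : c * n.choose s ≤ n.choose k := by
  have hpos : 0 < k.choose s := choose_pos hsk
  refine le_of_mul_le_mul_right ?_ hpos
  calc c * n.choose s * k.choose s = n.choose s * (c * k.choose s) := by ring
    _ ≤ n.choose s * (n - s).choose (k - s) := Nat.mul_le_mul_left _ h
    _ = n.choose k * k.choose s := (choose_mul hsk).symm

theorem four_mul_choose_four_le {m : ℕ} (hm : 3 ≤ m) :
    4 * (m + 3).choose 4 ≤ (2 * m + 2).choose 4 := by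
  refine le_of_mul_le_mul_left ?_ (factorial_pos 4)
  rw [mul_left_comm, ← descFactorial_eq_factorial_mul_choose,
    ← descFactorial_eq_factorial_mul_choose]
  obtain ⟨a, rfl⟩ : ∃ a, m = a + 3 := ⟨m - 3, by omega⟩
  rw [show 2 * (a + 3) + 2 = 2 * a + 8 by ring]
  simp only [succ_descFactorial_succ, descFactorial_zero]
  nlinarith [sq_nonneg a]

end Nat

theorem stmt_15 (m : ℕ) (hm : 3 ≤ m) :
    2 * (3 * m + 1).choose (m - 2) + 2 * (3 * m + 1).choose (m - 1) ≤
      (3 * m + 1).choose (m + 3) := by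
  have hincr : (3 * m + 1).choose (m - 2) ≤ (3 * m + 1).choose (m - 1) := by
    have := Nat.choose_le_succ_of_lt_half_left (n := 3 * m + 1) (r := m - 2) (by omega)
    rwa [show m - 2 + 1 = m - 1 by omega] at this
  have hjump : 4 * (3 * m + 1).choose (m - 1) ≤ (3 * m + 1).choose (m + 3) := by
    refine Nat.mul_choose_le_choose_of_mul_choose_le (by omega) ?_
    rw [show 3 * m + 1 - (m - 1) = 2 * m + 2 by omega, show m + 3 - (m - 1) = 4 by omega,
      Nat.choose_symm_of_eq_add (show m + 3 = m - 1 + 4 by omega)]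
    exact Nat.four_mul_choose_four_le hm
  omega
end
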